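/- arXiv:1701.06790 — 5 statements merged into one kernel-verified Lean document; each statement's English description precedes it below -/
import Mathlib

section
/- For any pregraph H, the quotient pregraph H̄, obtained by quotienting ports by ≡^P and nodes by ≡^N and taking the induced relations on equivalence classes, satisfies: the induced port-node relation of H̄ associates at most one node class to every port class. -/
/-- A pregraph: nodes, ports, a port-node relation, a symmetric port-port
relation, and an attribute function assigning sets of attributes to
nodes and ports. -/
structure Pregraph (N P A : Type) where
  PN : P → N → Prop
  PP : P → P → Prop
  pp_symm : ∀ p q, PP p q → PP q p
  att : N ⊕ P → Set A

namespace Pregraph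

variable {N P A : Type}

/-- The port equivalence `≡^P = (PP ∘ PP)^*`. -/
def portEquiv (H : Pregraph N P A) : P → P → Prop :=
  Relation.ReflTransGen (Relation.Comp H.PP H.PP)

/-- One step of the node relation: `PN⁻ ∘ ≡^P ∘ PN`. -/
def nodeStep (H : Pregraph N P A) : N → N → Prop :=
  fun n₁ n₂ => ∃ p₁ p₂, H.PN p₁ n₁ ∧ H.portEquiv p₁ p₂ ∧ H.PN p₂ n₂

/-- The node equivalence `≡^N = (PN⁻ ∘ ≡^P ∘ PN)^*`. -/
def nodeEquiv (H : Pregraph N P A) : N → N → Prop :=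
  Relation.ReflTransGen H.nodeStep

/-- A graph: every port is associated to at most one node, linked to at
most one port, and never linked to itself. -/
def IsGraph (G : Pregraph N P A) : Prop :=
  (∀ p n₁ n₂, G.PN p n₁ → G.PN p n₂ → n₁ = n₂) ∧
  (∀ p q₁ q₂, G.PP p q₁ → G.PP p q₂ → q₁ = q₂) ∧
  (∀ p, ¬ G.PP p p)

end Pregraph
theorem Pregraph.portEquiv_equivalence' {N P A : Type} (H : Pregraph N P A) :
    Equivalence H.portEquiv := by
  have hs : ∀ a b, Relation.Comp H.PP H.PP a b → Relation.Comp H.PP H.PP b a := by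
    rintro a b ⟨c, h1, h2⟩
    exact ⟨c, H.pp_symm _ _ h2, H.pp_symm _ _ h1⟩
  refine ⟨fun x => Relation.ReflTransGen.refl, ?_,
    fun h1 h2 => Relation.ReflTransGen.trans h1 h2⟩
  intro x y h
  induction h with
  | refl => exact Relation.ReflTransGen.refl
  | tail _ h2 ih =>
      exact Relation.ReflTransGen.trans (Relation.ReflTransGen.single (hs _ _ h2)) ih

theorem Pregraph.nodeEquiv_equivalence' {N P A : Type} (H : Pregraph N P A) :
    Equivalence H.nodeEquiv := by
  have hsym : ∀ {a b : P}, H.portEquiv a b → H.portEquiv b a :=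
    fun h => (Pregraph.portEquiv_equivalence' H).symm h
  have hs : ∀ a b, H.nodeStep a b → H.nodeStep b a := by
    rintro a b ⟨p₁, p₂, h1, h2, h3⟩
    exact ⟨p₂, p₁, h3, hsym h2, h1⟩
  refine ⟨fun x => Relation.ReflTransGen.refl, ?_,
    fun h1 h2 => Relation.ReflTransGen.trans h1 h2⟩
  intro x y h
  induction h with
  | refl => exact Relation.ReflTransGen.refl
  | tail _ h2 ih =>
      exact Relation.ReflTransGen.trans (Relation.ReflTransGen.single (hs _ _ h2)) ih

/-- The setoid of ports under `≡^P`. -/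
def Pregraph.portSetoid {N P A : Type} (H : Pregraph N P A) : Setoid P :=
  ⟨H.portEquiv, Pregraph.portEquiv_equivalence' H⟩

/-- The setoid of nodes under `≡^N`. -/
def Pregraph.nodeSetoid {N P A : Type} (H : Pregraph N P A) : Setoid N :=
  ⟨H.nodeEquiv, Pregraph.nodeEquiv_equivalence' H⟩

/-- The quotient pregraph `H̄`, whose nodes (resp. ports) are the `≡^N`
(resp. `≡^P`) classes, with the induced relations and attributes. -/
def Pregraph.quot {N P A : Type} (H : Pregraph N P A) :
    Pregraph (Quotient H.nodeSetoid) (Quotient H.portSetoid) A where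
  PN := fun pc nc => ∃ p n, H.PN p n ∧ pc = Quotient.mk H.portSetoid p ∧
    nc = Quotient.mk H.nodeSetoid n
  PP := fun pc qc => ∃ p q, H.PP p q ∧ pc = Quotient.mk H.portSetoid p ∧
    qc = Quotient.mk H.portSetoid q
  pp_symm := by
    rintro a b ⟨p, q, h, rfl, rfl⟩
    exact ⟨q, p, H.pp_symm _ _ h, rfl, rfl⟩
  att := Sum.elim
    (fun nc => {a | ∃ n, nc = Quotient.mk H.nodeSetoid n ∧ a ∈ H.att (Sum.inl n)})
    (fun pc => {a | ∃ p, pc = Quotient.mk H.portSetoid p ∧ a ∈ H.att (Sum.inr p)})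

/-- Pregraph homomorphisms (built over an attribute homomorphism `fA`). -/
structure Pregraph.Hom {N P A N' P' A' : Type}
    (H : Pregraph N P A) (H' : Pregraph N' P' A') where
  fN : N → N'
  fP : P → P'
  fA : A → A'
  mapPN : ∀ p n, H.PN p n → H'.PN (fP p) (fN n)
  mapPP : ∀ p q, H.PP p q → H'.PP (fP p) (fP q)
  mapAtt : ∀ x a, a ∈ H.att x → fA a ∈ H'.att (Sum.map fN fP x)

/-- Two pregraphs are isomorphic when there are mutually inverse
homomorphisms between them. -/
def Pregraph.Isomorphic {N P A N' P' A' : Type}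
    (H : Pregraph N P A) (H' : Pregraph N' P' A') : Prop :=
  ∃ (f : Pregraph.Hom H H') (g : Pregraph.Hom H' H),
    (∀ n, g.fN (f.fN n) = n) ∧ (∀ p, g.fP (f.fP p) = p) ∧ (∀ a, g.fA (f.fA a) = a) ∧
    (∀ n, f.fN (g.fN n) = n) ∧ (∀ p, f.fP (g.fP p) = p) ∧ (∀ a, f.fA (g.fA a) = a)

/-- in the quotient pregraph `H̄`, the induced port-node
relation associates at most one node class to every port class. -/
theorem quot_pn_functional {N P A : Type} [Fintype N] [Fintype P]
    (H : Pregraph N P A) :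
    ∀ pc nc₁ nc₂, H.quot.PN pc nc₁ → H.quot.PN pc nc₂ → nc₁ = nc₂ := by
  rintro pc nc₁ nc₂ ⟨p₁, n₁, h1, rfl, rfl⟩ ⟨p₂, n₂, h2, hp, rfl⟩
  have hpe : H.portEquiv p₁ p₂ := (Pregraph.portEquiv_equivalence' H).symm (Quotient.exact hp.symm)
  exact Quotient.sound (Relation.ReflTransGen.single ⟨p₁, p₂, h1, hpe, h2⟩)
end

section
/- For any pregraph H, in the quotient pregraph H̄ the induced port-port relation links each port class to at most one other port class; that is, if ([p],[q₁]) and ([p],[q₂]) are both in PP_H̄ then [q₁] = [q₂]. -/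
/-- in the quotient pregraph `H̄`, the induced port-port
relation links each port class to at most one other port class. -/
theorem quot_pp_functional {N P A : Type} [Fintype N] [Fintype P]
    (H : Pregraph N P A) :
    ∀ pc qc₁ qc₂, H.quot.PP pc qc₁ → H.quot.PP pc qc₂ → qc₁ = qc₂ := by
  have key : ∀ p p', H.portEquiv p p' → ∀ q₁ q₂, H.PP q₁ p → H.PP p' q₂ →
      H.portEquiv q₁ q₂ := by
    intro p p' h
    induction h using Relation.ReflTransGen.head_induction_on with
    | refl =>
        intro q₁ q₂ h1 h2
        exact Relation.ReflTransGen.single ⟨p', h1, h2⟩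
    | head hstep _ ih =>
        rename_i a c _
        intro q₁ q₂ h1 h2
        obtain ⟨d, hd1, hd2⟩ := hstep
        exact Relation.ReflTransGen.trans
          (Relation.ReflTransGen.single ⟨a, h1, hd1⟩) (ih d q₂ hd2 h2)
  rintro pc qc₁ qc₂ ⟨p, q₁, h1, rfl, rfl⟩ ⟨p', q₂, h2, hp, rfl⟩
  have hpe : H.portEquiv p p' := Quotient.exact hp
  exact Quotient.sound (key p p' hpe q₁ q₂ (H.pp_symm _ _ h1) h2)
end

section
/- For a pregraph H, the quotient pregraph H̄ is a graph (i.e., PN_H̄ is functional, PP_H̄ is functional, symmetric, and irreflexive) if and only if H contains no odd loop, i.e., no closed path (p₁, p₂, …, p_k) with p₁ = p_k and odd length k−1. -/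
def Pregraph.HasOddLoop {N P A : Type} (H : Pregraph N P A) : Prop :=
  ∃ l : List P, l ≠ [] ∧ l.Chain' H.PP ∧ l.head? = l.getLast? ∧ Odd (l.length - 1)

namespace Pregraph

variable {N P A : Type} (H : Pregraph N P A)

theorem portEquiv_of_pp_of_pp {p p' q q' : P} (hq : H.PP q p) (h : H.portEquiv p p')
    (hq' : H.PP p' q') : H.portEquiv q q' := by
  induction h using Relation.ReflTransGen.head_induction_on generalizing q with
  | refl => exact .single ⟨_, hq, hq'⟩
  | head hstep _ ih =>
    obtain ⟨m, hpm, hmp⟩ := hstep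
    exact .head ⟨_, hq, hpm⟩ (ih hmp)

theorem portEquiv_getLast_of_isChain :
    ∀ {a : P} {l : List P}, (a :: l).IsChain H.PP → Even l.length →
      H.portEquiv a ((a :: l).getLast (List.cons_ne_nil a l))
  | _, [], _, _ => .refl
  | _, [_], _, he => absurd he (by simp)
  | _, b :: c :: l, h, he => by
    rw [List.isChain_cons_cons, List.isChain_cons_cons] at h
    obtain ⟨hab, hbc, hc⟩ := h
    have hl : Even l.length := by simpa [Nat.even_add_one] using he
    rw [List.getLast_cons_cons, List.getLast_cons_cons]
    exact .head ⟨b, hab, hbc⟩ (portEquiv_getLast_of_isChain hc hl)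

theorem exists_isChain_of_portEquiv {a b : P} (h : H.portEquiv a b) :
    ∃ l : List P, (a :: l).IsChain H.PP ∧
      (a :: l).getLast (List.cons_ne_nil a l) = b ∧ Even l.length := by
  induction h with
  | refl => exact ⟨[], .singleton a, rfl, .zero⟩
  | @tail b c _ hstep ih =>
    obtain ⟨m, hbm, hmc⟩ := hstep
    obtain ⟨l, hl, rfl, he⟩ := ih
    refine ⟨l ++ [m, c], ?_, by simp, by simpa [Nat.even_add_one] using he⟩
    rw [← List.cons_append, List.isChain_append]
    exact ⟨hl, List.isChain_pair.2 hmc, by simpa [List.getLast?_eq_some_getLast] using hbm⟩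

theorem hasOddLoop_iff_exists_pp_portEquiv :
    H.HasOddLoop ↔ ∃ p q, H.PP p q ∧ H.portEquiv q p := by
  constructor
  · rintro ⟨_ | ⟨p, _ | ⟨q, l⟩⟩, hne, hc, hloop, hodd⟩
    · exact absurd rfl hne
    · exact absurd hodd (by simp)
    · obtain ⟨hpq, hc⟩ := List.isChain_cons_cons.1 hc
      have he : Even l.length := by simpa [Nat.odd_add_one] using hodd
      have hlast : (q :: l).getLast (List.cons_ne_nil q l) = p := by
        simpa [List.getLast?_eq_some_getLast] using hloop.symm
      exact ⟨p, q, hpq, hlast ▸ H.portEquiv_getLast_of_isChain hc he⟩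
  · rintro ⟨p, q, hpq, hqp⟩
    obtain ⟨l, hc, hlast, he⟩ := H.exists_isChain_of_portEquiv hqp
    refine ⟨p :: q :: l, List.cons_ne_nil _ _, List.isChain_cons_cons.2 ⟨hpq, hc⟩, ?_, ?_⟩
    · simp [List.getLast?_eq_some_getLast, hlast]
    · simpa [Nat.odd_add_one] using he

theorem quot_pn_unique :
    ∀ p n₁ n₂, H.quot.PN p n₁ → H.quot.PN p n₂ → n₁ = n₂ := by
  rintro _ _ _ ⟨p, n, hpn, rfl, rfl⟩ ⟨p', n', hpn', hpp', rfl⟩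
  exact Quotient.sound (.single ⟨p, p', hpn, Quotient.exact hpp', hpn'⟩)

theorem quot_pp_unique :
    ∀ p q₁ q₂, H.quot.PP p q₁ → H.quot.PP p q₂ → q₁ = q₂ := by
  rintro _ _ _ ⟨p, q, hpq, rfl, rfl⟩ ⟨p', q', hpq', hpp', rfl⟩
  exact Quotient.sound
    (H.portEquiv_of_pp_of_pp (H.pp_symm _ _ hpq) (Quotient.exact hpp') hpq')

theorem exists_quot_pp_self_iff :
    (∃ c, H.quot.PP c c) ↔ ∃ p q, H.PP p q ∧ H.portEquiv q p := by
  constructor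
  · rintro ⟨_, p, q, hpq, rfl, hqp⟩
    exact ⟨p, q, hpq, Quotient.exact hqp.symm⟩
  · rintro ⟨p, q, hpq, hqp⟩
    exact ⟨_, p, q, hpq, rfl, (Quotient.sound hqp).symm⟩

end Pregraph

theorem quot_isGraph_iff_no_odd_loop_general {N P A : Type}
    (H : Pregraph N P A) :
    H.quot.IsGraph ↔ ¬ H.HasOddLoop := by
  rw [H.hasOddLoop_iff_exists_pp_portEquiv, ← H.exists_quot_pp_self_iff, not_exists]
  exact ⟨fun h => h.2.2, fun h => ⟨H.quot_pn_unique, H.quot_pp_unique, h⟩⟩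

/-- the quotient pregraph `H̄` is a graph iff `H` has no odd
loop. -/
theorem quot_isGraph_iff_no_odd_loop {N P A : Type} [Fintype N] [Fintype P]
    (H : Pregraph N P A) :
    H.quot.IsGraph ↔ ¬ H.HasOddLoop :=
  quot_isGraph_iff_no_odd_loop_general H
end

section
/- If G is a graph (a pregraph where each port is associated to at most one node, linked to at most one port, and never to itself), then the quotient pregraph Ḡ is isomorphic to G. -/
/-- if `G` is a graph, then its quotient pregraph `Ḡ` is
isomorphic to `G`. -/
theorem quot_of_graph_isomorphic {N P A : Type} [Fintype N] [Fintype P]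
    (G : Pregraph N P A) (hG : G.IsGraph) :
    Pregraph.Isomorphic G.quot G := by
  obtain ⟨hPN, hPP, _⟩ := hG
  have hPeq : ∀ p q : P, G.portEquiv p q → p = q := by
    intro p q h
    induction h with
    | refl => rfl
    | tail _ h2 ih =>
        obtain ⟨c, h1, h2⟩ := h2
        exact ih.trans (hPP c _ _ (G.pp_symm _ _ h1) h2)
  have hNeq : ∀ n m : N, G.nodeEquiv n m → n = m := by
    intro n m h
    induction h with
    | refl => rfl
    | tail _ h2 ih =>
        obtain ⟨p₁, p₂, h1, h2, h3⟩ := h2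
        have := hPeq _ _ h2
        subst this
        exact ih.trans (hPN _ _ _ h1 h3)
  classical
  refine ⟨{ fN := Quotient.lift id hNeq, fP := Quotient.lift id hPeq, fA := id,
            mapPN := ?_, mapPP := ?_, mapAtt := ?_ },
          { fN := Quotient.mk G.nodeSetoid, fP := Quotient.mk G.portSetoid, fA := id,
            mapPN := ?_, mapPP := ?_, mapAtt := ?_ },
          ?_, ?_, fun a => rfl, ?_, ?_, fun a => rfl⟩
  · rintro pc nc ⟨p, n, h, rfl, rfl⟩; exact h
  · rintro pc qc ⟨p, q, h, rfl, rfl⟩; exact h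
  · rintro (nc | pc) a ha
    · obtain ⟨n, rfl, ha⟩ := ha; exact ha
    · obtain ⟨p, rfl, ha⟩ := ha; exact ha
  · intro p n h; exact ⟨p, n, h, rfl, rfl⟩
  · intro p q h; exact ⟨p, q, h, rfl, rfl⟩
  · rintro (n | p) a ha
    · exact ⟨n, rfl, ha⟩
    · exact ⟨p, rfl, ha⟩
  · intro n; induction n using Quotient.ind; rfl
  · intro p; induction p using Quotient.ind; rfl
  · intro n; rfl
  · intro p; rfl
end

section
/- Let R be a conflict free environment sensitive graph rewrite system such that for every rule L → R' in it, no two environment ports of L are connected by a new port-port connection in R'. Then for any graph G and any parallel rewrite step G ⇛ G', the result G' is a graph. -/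
/-- A pregraph given by carrier sets of items of type `I`: a set of nodes, a
set of ports, a port-node relation `pn`, a symmetric port-port relation `pp`,
and an attribute function assigning to each item a set of attributes. -/
structure SPregraph (I A : Type) where
  nodes : Set I
  ports : Set I
  pn : Set (I × I)
  pp : Set (I × I)
  pp_symm : ∀ p q, (p, q) ∈ pp → (q, p) ∈ pp
  att : I → Set A

namespace SPregraph

/-- A graph: every port is associated to at most one node, linked to at most
one port, and never linked to itself. -/
def IsGraph {I A : Type} (G : SPregraph I A) : Prop :=
  (∀ p n₁ n₂, (p, n₁) ∈ G.pn → (p, n₂) ∈ G.pn → n₁ = n₂) ∧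
  (∀ p q₁ q₂, (p, q₁) ∈ G.pp → (p, q₂) ∈ G.pp → q₁ = q₂) ∧
  (∀ p, (p, p) ∉ G.pp)

/-- The relations `pn` and `pp` only involve declared ports and nodes. -/
def Supported {I A : Type} (G : SPregraph I A) : Prop :=
  (∀ x ∈ G.pn, x.1 ∈ G.ports ∧ x.2 ∈ G.nodes) ∧
  (∀ x ∈ G.pp, x.1 ∈ G.ports ∧ x.2 ∈ G.ports)

/-- The port equivalence `≡^P = (PP ∘ PP)^*`. -/
def portEquiv {I A : Type} (G : SPregraph I A) : I → I → Prop :=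
  Relation.ReflTransGen
    (Relation.Comp (fun p q => (p, q) ∈ G.pp) (fun p q => (p, q) ∈ G.pp))

/-- The node equivalence `≡^N = (PN⁻ ∘ ≡^P ∘ PN)^*`. -/
def nodeEquiv {I A : Type} (G : SPregraph I A) : I → I → Prop :=
  Relation.ReflTransGen
    (fun n₁ n₂ => ∃ p₁ p₂, (p₁, n₁) ∈ G.pn ∧ G.portEquiv p₁ p₂ ∧ (p₂, n₂) ∈ G.pn)

/-- The `≡^P`-class of a port. -/
def clsP {I A : Type} (G : SPregraph I A) (p : I) : Set I := {q | G.portEquiv p q}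

/-- The `≡^N`-class of a node. -/
def clsN {I A : Type} (G : SPregraph I A) (n : I) : Set I := {m | G.nodeEquiv n m}

/-- The quotient pregraph `Ḡ`: items are equivalence classes (represented as
sets of items), with the induced relations and attributes. -/
def quot {I A : Type} (G : SPregraph I A) : SPregraph (Set I) A where
  nodes := {c | ∃ n ∈ G.nodes, c = G.clsN n}
  ports := {c | ∃ p ∈ G.ports, c = G.clsP p}
  pn := {x | ∃ p n, (p, n) ∈ G.pn ∧ x = (G.clsP p, G.clsN n)}
  pp := {x | ∃ p q, (p, q) ∈ G.pp ∧ x = (G.clsP p, G.clsP q)}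
  pp_symm := by
    rintro a b ⟨p, q, h, heq⟩
    refine ⟨q, p, G.pp_symm _ _ h, ?_⟩
    rw [Prod.ext_iff] at heq ⊢
    exact ⟨heq.2, heq.1⟩
  att := fun c => ⋃ x ∈ c, G.att x

/-- Pregraph homomorphisms, built over an attribute map `fA`. -/
structure Hom {I I' A : Type} (G : SPregraph I A) (H : SPregraph I' A) where
  fN : I → I'
  fP : I → I'
  fA : A → A
  mapsN : ∀ n ∈ G.nodes, fN n ∈ H.nodes
  mapsP : ∀ p ∈ G.ports, fP p ∈ H.ports
  mapPN : ∀ p n, (p, n) ∈ G.pn → (fP p, fN n) ∈ H.pn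
  mapPP : ∀ p q, (p, q) ∈ G.pp → (fP p, fP q) ∈ H.pp
  mapAttN : ∀ n ∈ G.nodes, ∀ a ∈ G.att n, fA a ∈ H.att (fN n)
  mapAttP : ∀ p ∈ G.ports, ∀ a ∈ G.att p, fA a ∈ H.att (fP p)

/-- `f` and `g` are mutually inverse homomorphisms. -/
def AreInverse {I I' A : Type} {G : SPregraph I A} {H : SPregraph I' A}
    (f : Hom G H) (g : Hom H G) : Prop :=
  (∀ n ∈ G.nodes, g.fN (f.fN n) = n) ∧ (∀ p ∈ G.ports, g.fP (f.fP p) = p) ∧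
  (∀ n ∈ H.nodes, f.fN (g.fN n) = n) ∧ (∀ p ∈ H.ports, f.fP (g.fP p) = p) ∧
  (∀ a, g.fA (f.fA a) = a) ∧ (∀ a, f.fA (g.fA a) = a)

/-- Isomorphism of pregraphs. -/
def Isomorphic {I I' A : Type} (G : SPregraph I A) (H : SPregraph I' A) : Prop :=
  ∃ (f : Hom G H) (g : Hom H G), AreInverse f g

/-- A match: an injective homomorphism. -/
structure Match {I I' A : Type} (G : SPregraph I A) (H : SPregraph I' A)
    extends Hom G H where
  injN : Set.InjOn toHom.fN G.nodes
  injP : Set.InjOn toHom.fP G.ports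

/-- An automorphism: a homomorphism of a pregraph to itself admitting an
inverse homomorphism. -/
def IsAuto {I A : Type} (G : SPregraph I A) (f : Hom G G) : Prop :=
  ∃ g : Hom G G, AreInverse f g

end SPregraph

open SPregraph in
/-- An environment sensitive rewrite rule `l → r`.  The left-hand side is
partitioned into cut and environment components (`cutN, cutP, cutPN, cutPP`
are the cut parts; the environment parts are the complements), and the
right-hand side into new and environment components (`newN, newP, newPN,
newPP` are the new parts; the environment parts are the complements and are
required to come from the environment of the left-hand side). -/
structure ESRR (A : Type) where
  lhs : SPregraph ℕ A
  rhs : SPregraph ℕ A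
  lhs_graph : lhs.IsGraph
  rhs_graph : rhs.IsGraph
  lhs_sup : lhs.Supported
  rhs_sup : rhs.Supported
  cutN : Set ℕ
  cutP : Set ℕ
  cutPN : Set (ℕ × ℕ)
  cutPP : Set (ℕ × ℕ)
  cutN_sub : cutN ⊆ lhs.nodes
  cutP_sub : cutP ⊆ lhs.ports
  cutPN_sub : cutPN ⊆ lhs.pn
  cutPP_sub : cutPP ⊆ lhs.pp
  cutPP_symm : ∀ p q, (p, q) ∈ cutPP → (q, p) ∈ cutPP
  /-- Constraint (1): connections touching a cut item are cut. -/
  cut_pn : ∀ p n, (p, n) ∈ lhs.pn → (n ∈ cutN ∨ p ∈ cutP) → (p, n) ∈ cutPN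
  /-- Constraint (2): port-port links touching a cut port are cut. -/
  cut_pp : ∀ p q, (p, q) ∈ lhs.pp → p ∈ cutP → (p, q) ∈ cutPP
  newN : Set ℕ
  newP : Set ℕ
  newPN : Set (ℕ × ℕ)
  newPP : Set (ℕ × ℕ)
  newN_sub : newN ⊆ rhs.nodes
  newP_sub : newP ⊆ rhs.ports
  newPN_sub : newPN ⊆ rhs.pn
  newPP_sub : newPP ⊆ rhs.pp
  newPP_symm : ∀ p q, (p, q) ∈ newPP → (q, p) ∈ newPP
  /-- Environment items of the right-hand side are environment items of the
  left-hand side. -/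
  envN_rhs : rhs.nodes \ newN ⊆ lhs.nodes \ cutN
  envP_rhs : rhs.ports \ newP ⊆ lhs.ports \ cutP
  newN_fresh : Disjoint newN lhs.nodes
  newP_fresh : Disjoint newP lhs.ports
  /-- Constraint (4): a port-node connection of `r` is environmental iff both
  of its items are environmental and it is an environment connection of `l`. -/
  env_pn : ∀ p n, (p, n) ∈ rhs.pn →
    ((p, n) ∉ newPN ↔ p ∉ newP ∧ n ∉ newN ∧ (p, n) ∈ lhs.pn ∧ (p, n) ∉ cutPN)
  /-- Constraint (5): idem for port-port connections. -/
  env_pp : ∀ p q, (p, q) ∈ rhs.pp →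
    ((p, q) ∉ newPP ↔ p ∉ newP ∧ q ∉ newP ∧ (p, q) ∈ lhs.pp ∧ (p, q) ∉ cutPP)

namespace ESRR

variable {A : Type}

/-- Environment nodes of the right-hand side. -/
def envNr (R : ESRR A) : Set ℕ := R.rhs.nodes \ R.newN

/-- Environment ports of the right-hand side. -/
def envPr (R : ESRR A) : Set ℕ := R.rhs.ports \ R.newP

/-- Environment nodes of the left-hand side. -/
def envNl (R : ESRR A) : Set ℕ := R.lhs.nodes \ R.cutN

/-- Environment ports of the left-hand side. -/
def envPl (R : ESRR A) : Set ℕ := R.lhs.ports \ R.cutP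

/-- The extension of a match to the items of the right-hand side: the match
on environment items and the identity on new (fresh) items. -/
noncomputable def extN (R : ESRR A) {g : SPregraph ℕ A}
    (m : SPregraph.Match R.lhs g) : ℕ → ℕ :=
  fun x => @ite _ (x ∈ R.lhs.nodes) (Classical.propDecidable _) (m.fN x) x

/-- Extension of a match on ports. -/
noncomputable def extP (R : ESRR A) {g : SPregraph ℕ A}
    (m : SPregraph.Match R.lhs g) : ℕ → ℕ :=
  fun x => @ite _ (x ∈ R.lhs.ports) (Classical.propDecidable _) (m.fP x) x

end ESRR

/-- The result of a single rewrite step `g →_{l → r, m} g'`: the matched cut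
components are removed and the new components of the right-hand side are
added (reconnected through the extended match). -/
noncomputable def rewriteResult {A : Type} (R : ESRR A) (g : SPregraph ℕ A)
    (m : SPregraph.Match R.lhs g) : SPregraph ℕ A where
  nodes := (g.nodes \ (m.fN '' R.cutN)) ∪ R.newN
  ports := (g.ports \ (m.fP '' R.cutP)) ∪ R.newP
  pn := (g.pn \ {x | ∃ c ∈ R.cutPN, x = (m.fP c.1, m.fN c.2)})
        ∪ {x | ∃ c ∈ R.newPN, x = (R.extP m c.1, R.extN m c.2)}
  pp := (g.pp \ {x | ∃ c ∈ R.cutPP, x = (m.fP c.1, m.fP c.2)})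
        ∪ {x | ∃ c ∈ R.newPP, x = (R.extP m c.1, R.extP m c.2)}
  pp_symm := by
    rintro p q (⟨hg, hc⟩ | ⟨c, hc, heq⟩)
    · left
      refine ⟨g.pp_symm _ _ hg, ?_⟩
      rintro ⟨d, hd, heq⟩
      rw [Prod.ext_iff] at heq
      exact hc ⟨(d.2, d.1), R.cutPP_symm _ _ hd, by
        rw [Prod.ext_iff]; exact ⟨heq.2, heq.1⟩⟩
    · right
      rw [Prod.ext_iff] at heq
      exact ⟨(c.2, c.1), R.newPP_symm _ _ hc, by
        rw [Prod.ext_iff]; exact ⟨heq.2, heq.1⟩⟩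
  att := fun x => {a | (x ∈ R.newN ∪ R.newP ∧ a ∈ R.rhs.att x) ∨
    (x ∉ R.newN ∪ R.newP ∧ a ∈ g.att x)}

/-- The intermediate pregraph `H` of a parallel rewrite step of `G` using a
family of (variants of) rules together with matches: all matched cut
components are removed simultaneously and all new components are added. -/
noncomputable def parResult {A ι : Type} (Rs : ι → ESRR A) (g : SPregraph ℕ A)
    (ms : ∀ i, SPregraph.Match (Rs i).lhs g) : SPregraph ℕ A where
  nodes := (g.nodes \ ⋃ i, (ms i).fN '' (Rs i).cutN) ∪ ⋃ i, (Rs i).newN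
  ports := (g.ports \ ⋃ i, (ms i).fP '' (Rs i).cutP) ∪ ⋃ i, (Rs i).newP
  pn := (g.pn \ ⋃ i, {x | ∃ c ∈ (Rs i).cutPN, x = ((ms i).fP c.1, (ms i).fN c.2)})
        ∪ ⋃ i, {x | ∃ c ∈ (Rs i).newPN,
            x = ((Rs i).extP (ms i) c.1, (Rs i).extN (ms i) c.2)}
  pp := (g.pp \ ⋃ i, {x | ∃ c ∈ (Rs i).cutPP, x = ((ms i).fP c.1, (ms i).fP c.2)})
        ∪ ⋃ i, {x | ∃ c ∈ (Rs i).newPP,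
            x = ((Rs i).extP (ms i) c.1, (Rs i).extP (ms i) c.2)}
  pp_symm := by
    rintro p q (⟨hg, hc⟩ | hnew)
    · left
      refine ⟨g.pp_symm _ _ hg, ?_⟩
      intro hmem
      apply hc
      simp only [Set.mem_iUnion, Set.mem_setOf_eq] at hmem ⊢
      obtain ⟨i, d, hd, heq⟩ := hmem
      rw [Prod.ext_iff] at heq
      exact ⟨i, (d.2, d.1), (Rs i).cutPP_symm _ _ hd, by
        rw [Prod.ext_iff]; exact ⟨heq.2, heq.1⟩⟩
    · right
      simp only [Set.mem_iUnion, Set.mem_setOf_eq] at hnew ⊢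
      obtain ⟨i, d, hd, heq⟩ := hnew
      rw [Prod.ext_iff] at heq
      exact ⟨i, (d.2, d.1), (Rs i).newPP_symm _ _ hd, by
        rw [Prod.ext_iff]; exact ⟨heq.2, heq.1⟩⟩
  att := fun x => {a | (∃ i, x ∈ (Rs i).newN ∪ (Rs i).newP ∧ a ∈ (Rs i).rhs.att x) ∨
    ((∀ i, x ∉ (Rs i).newN ∪ (Rs i).newP) ∧ a ∈ g.att x)}

/-- The compatibility conditions of two rules at a pair of matches into a
common graph: no element of `mᵢ(rᵢ^env)` lies in `mⱼ(lⱼ^cut)`. -/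
def CompatAt {A : Type} (R₁ R₂ : ESRR A) {g : SPregraph ℕ A}
    (m₁ : SPregraph.Match R₁.lhs g) (m₂ : SPregraph.Match R₂.lhs g) : Prop :=
  (∀ n ∈ R₁.envNr, m₁.fN n ∉ m₂.fN '' R₂.cutN) ∧
  (∀ p ∈ R₁.envPr, m₁.fP p ∉ m₂.fP '' R₂.cutP) ∧
  (∀ n ∈ R₂.envNr, m₂.fN n ∉ m₁.fN '' R₁.cutN) ∧
  (∀ p ∈ R₂.envPr, m₂.fP p ∉ m₁.fP '' R₁.cutP)

/-- Two environment sensitive rewrite rules are compatible. -/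
def Compatible {A : Type} (R₁ R₂ : ESRR A) : Prop :=
  ∀ (g : SPregraph ℕ A), g.IsGraph →
    ∀ (m₁ : SPregraph.Match R₁.lhs g) (m₂ : SPregraph.Match R₂.lhs g),
      CompatAt R₁ R₂ m₁ m₂


section Aux

namespace SPregraph

variable {I A : Type} (G : SPregraph I A)

lemma portEquiv_symm {p q : I} (h : G.portEquiv p q) : G.portEquiv q p := by
  induction h with
  | refl => exact Relation.ReflTransGen.refl
  | tail _ hstep ih =>
      obtain ⟨z, h1, h2⟩ := hstep
      exact Relation.ReflTransGen.head ⟨z, G.pp_symm _ _ h2, G.pp_symm _ _ h1⟩ ih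

lemma clsP_eq_of_equiv {p q : I} (h : G.portEquiv p q) : G.clsP p = G.clsP q := by
  ext x
  simp only [clsP, Set.mem_setOf_eq]
  exact ⟨fun hx => (G.portEquiv_symm h).trans hx, fun hx => h.trans hx⟩

lemma equiv_of_clsP_eq {p q : I} (h : G.clsP p = G.clsP q) : G.portEquiv p q := by
  have : q ∈ G.clsP q := Relation.ReflTransGen.refl
  rw [← h] at this
  exact this

lemma ppEquiv_extend {a b c d : I} (hab : (a, b) ∈ G.pp) (hbc : G.portEquiv b c)
    (hcd : (c, d) ∈ G.pp) : G.portEquiv a d := by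
  induction hbc generalizing d with
  | refl => exact Relation.ReflTransGen.single ⟨_, hab, hcd⟩
  | tail _ hstep ih =>
      obtain ⟨x, h1, h2⟩ := hstep
      exact (ih h1).tail ⟨_, h2, hcd⟩

lemma nodeEquiv_symm {n m : I} (h : G.nodeEquiv n m) : G.nodeEquiv m n := by
  induction h with
  | refl => exact Relation.ReflTransGen.refl
  | tail _ hstep ih =>
      obtain ⟨p₁, p₂, h1, he, h2⟩ := hstep
      exact Relation.ReflTransGen.head ⟨p₂, p₁, h2, G.portEquiv_symm he, h1⟩ ih

lemma clsN_eq_of_equiv {n m : I} (h : G.nodeEquiv n m) : G.clsN n = G.clsN m := by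
  ext x
  simp only [clsN, Set.mem_setOf_eq]
  exact ⟨fun hx => (G.nodeEquiv_symm h).trans hx, fun hx => h.trans hx⟩

end SPregraph

/-- Color of an old port: whether its unique `g`-partner is smaller. -/
def colOld {A : Type} (g : SPregraph ℕ A) (x : ℕ) : Prop :=
  ∃ q, (x, q) ∈ g.pp ∧ q < x

/-- 2-coloring of the ports of the intermediate pregraph `H`. -/
def colH {A : Type} (g H : SPregraph ℕ A) (x : ℕ) : Prop :=
  (x ∈ g.ports ∧ colOld g x) ∨
  (x ∉ g.ports ∧
    ((∃ y, (x, y) ∈ H.pp ∧ y ∈ g.ports ∧ ¬ colOld g y) ∨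
     (∃ y, (x, y) ∈ H.pp ∧ y ∉ g.ports ∧ y < x)))

section ParAux

variable {A ι : Type} {Rs : ι → ESRR A} {g : SPregraph ℕ A}
  {ms : ∀ i, SPregraph.Match (Rs i).lhs g}

/-- Classification of the extension of the match on right-hand side ports. -/
lemma extP_class (i : ι) {c : ℕ} (hc : c ∈ (Rs i).rhs.ports) :
    (c ∈ (Rs i).newP ∧ (Rs i).extP (ms i) c = c) ∨
    (c ∈ (Rs i).lhs.ports ∧ c ∉ (Rs i).cutP ∧
      (Rs i).extP (ms i) c = (ms i).fP c) := by
  by_cases h : c ∈ (Rs i).newP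
  · left
    refine ⟨h, ?_⟩
    have hnl : c ∉ (Rs i).lhs.ports :=
      fun hl => (Rs i).newP_fresh.ne_of_mem h hl rfl
    simp only [ESRR.extP]
    exact if_neg hnl
  · right
    have henv := (Rs i).envP_rhs ⟨hc, h⟩
    refine ⟨henv.1, henv.2, ?_⟩
    simp only [ESRR.extP]
    exact if_pos henv.1

lemma Hpp_cases {x y : ℕ} (h : (x, y) ∈ (parResult Rs g ms).pp) :
    (x, y) ∈ g.pp ∨
    ∃ i c₁ c₂, (c₁, c₂) ∈ (Rs i).newPP ∧
      x = (Rs i).extP (ms i) c₁ ∧ y = (Rs i).extP (ms i) c₂ := by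
  rcases h with ⟨hg, _⟩ | hnew
  · exact Or.inl hg
  · right
    simp only [Set.mem_iUnion, Set.mem_setOf_eq] at hnew
    obtain ⟨i, c, hc, heq⟩ := hnew
    rw [Prod.ext_iff] at heq
    exact ⟨i, c.1, c.2, hc, heq.1, heq.2⟩

/-- Every endpoint of an edge of `H` is an old port or a new port. -/
lemma Hpp_endpoint (hsup : g.Supported) {x y : ℕ}
    (h : (x, y) ∈ (parResult Rs g ms).pp) :
    x ∈ g.ports ∨ ∃ i, x ∈ (Rs i).newP := by
  rcases Hpp_cases h with hold | ⟨i, c₁, c₂, hc, hx, _⟩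
  · exact Or.inl (hsup.2 _ hold).1
  · have hc₁ : c₁ ∈ (Rs i).rhs.ports :=
      ((Rs i).rhs_sup.2 _ ((Rs i).newPP_sub hc)).1
    rcases extP_class i hc₁ with ⟨hn, he⟩ | ⟨hl, _, he⟩
    · exact Or.inr ⟨i, by rw [hx, he]; exact hn⟩
    · exact Or.inl (by rw [hx, he]; exact (ms i).mapsP _ hl)

/-- A new port has a unique neighbor in `H`. -/
lemma Hpp_uniq (hfreshP : ∀ i, Disjoint (Rs i).newP g.ports)
    (hpairP : ∀ i j, i ≠ j → Disjoint (Rs i).newP (Rs j).newP)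
    (hsup : g.Supported) {i : ι} {x : ℕ} (hx : x ∈ (Rs i).newP)
    {y y' : ℕ} (h : (x, y) ∈ (parResult Rs g ms).pp)
    (h' : (x, y') ∈ (parResult Rs g ms).pp) : y = y' := by
  have hxg : x ∉ g.ports := fun hmem => (hfreshP i).ne_of_mem hx hmem rfl
  have key : ∀ z : ℕ, (x, z) ∈ (parResult Rs g ms).pp →
      ∃ c₂, (x, c₂) ∈ (Rs i).newPP ∧ z = (Rs i).extP (ms i) c₂ := by
    intro z hz
    rcases Hpp_cases hz with hold | ⟨j, c₁, c₂, hc, hx1, hz1⟩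
    · exact absurd (hsup.2 _ hold).1 hxg
    · have hc₁ : c₁ ∈ (Rs j).rhs.ports :=
        ((Rs j).rhs_sup.2 _ ((Rs j).newPP_sub hc)).1
      rcases extP_class j hc₁ with ⟨hn, he⟩ | ⟨hl, _, he⟩
      · have hxc : x = c₁ := by rw [hx1, he]
        have hij : j = i := by
          by_contra hne
          exact (hpairP i j (fun hh => hne hh.symm)).ne_of_mem hx
            (by rw [hxc]; exact hn) rfl
        subst hij
        rw [← hxc] at hc
        exact ⟨c₂, hc, hz1⟩
      · exact absurd (by rw [hx1, he]; exact (ms j).mapsP _ hl : x ∈ g.ports) hxg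
  obtain ⟨c₂, hc, hy⟩ := key y h
  obtain ⟨d₂, hd, hy'⟩ := key y' h'
  have : c₂ = d₂ :=
    (Rs i).rhs_graph.2.1 x c₂ d₂ ((Rs i).newPP_sub hc) ((Rs i).newPP_sub hd)
  rw [hy, hy', this]

/-- Any edge of `H` between two old ports is an edge of `g`. -/
lemma Hpp_old (hkey : ∀ i, ∀ p ∈ (Rs i).envPl, ∀ p' ∈ (Rs i).envPl,
      (p, p') ∉ (Rs i).newPP)
    (hfreshP : ∀ i, Disjoint (Rs i).newP g.ports) {x y : ℕ}
    (h : (x, y) ∈ (parResult Rs g ms).pp) (hx : x ∈ g.ports)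
    (hy : y ∈ g.ports) : (x, y) ∈ g.pp := by
  rcases Hpp_cases h with hold | ⟨i, c₁, c₂, hc, hx1, hy1⟩
  · exact hold
  · exfalso
    have hpp := (Rs i).newPP_sub hc
    have hc₁ : c₁ ∈ (Rs i).rhs.ports := ((Rs i).rhs_sup.2 _ hpp).1
    have hc₂ : c₂ ∈ (Rs i).rhs.ports := ((Rs i).rhs_sup.2 _ hpp).2
    rcases extP_class i hc₁ with ⟨hn, he⟩ | ⟨hl1, hcut1, _⟩
    · exact (hfreshP i).ne_of_mem hn (by rw [← he, ← hx1]; exact hx) rfl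
    rcases extP_class i hc₂ with ⟨hn, he⟩ | ⟨hl2, hcut2, _⟩
    · exact (hfreshP i).ne_of_mem hn (by rw [← he, ← hy1]; exact hy) rfl
    exact hkey i c₁ ⟨hl1, hcut1⟩ c₂ ⟨hl2, hcut2⟩ hc

/-- `H` has no self-loops. -/
lemma Hpp_irrefl (hg : g.IsGraph)
    (hfreshP : ∀ i, Disjoint (Rs i).newP g.ports) (x : ℕ) :
    (x, x) ∉ (parResult Rs g ms).pp := by
  intro h
  rcases Hpp_cases h with hold | ⟨i, c₁, c₂, hc, hx1, hx2⟩
  · exact hg.2.2 x hold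
  · have hpp := (Rs i).newPP_sub hc
    have hc₁ : c₁ ∈ (Rs i).rhs.ports := ((Rs i).rhs_sup.2 _ hpp).1
    have hc₂ : c₂ ∈ (Rs i).rhs.ports := ((Rs i).rhs_sup.2 _ hpp).2
    rcases extP_class i hc₁ with ⟨hn1, he1⟩ | ⟨hl1, _, he1⟩ <;>
      rcases extP_class i hc₂ with ⟨hn2, he2⟩ | ⟨hl2, _, he2⟩
    · have : c₁ = c₂ := by rw [← he1, ← hx1, hx2, he2]
      rw [this] at hpp
      exact (Rs i).rhs_graph.2.2 c₂ hpp
    · have : c₁ = (ms i).fP c₂ := by rw [← he1, ← hx1, hx2, he2]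
      exact (hfreshP i).ne_of_mem hn1
        (by rw [this]; exact (ms i).mapsP _ hl2) rfl
    · have : c₂ = (ms i).fP c₁ := by rw [← he2, ← hx2, hx1, he1]
      exact (hfreshP i).ne_of_mem hn2
        (by rw [this]; exact (ms i).mapsP _ hl1) rfl
    · have : c₁ = c₂ := by
        apply (ms i).injP hl1 hl2
        rw [← he1, ← he2, ← hx1, ← hx2]
      rw [this] at hpp
      exact (Rs i).rhs_graph.2.2 c₂ hpp

/-- For an old port, `colOld` means exactly that its actual partner is
smaller. -/
lemma colOld_iff (hg : g.IsGraph) {x y : ℕ} (h : (x, y) ∈ g.pp) :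
    colOld g x ↔ y < x := by
  constructor
  · rintro ⟨q, hq, hlt⟩
    rwa [hg.2.1 x q y hq h] at hlt
  · intro hlt
    exact ⟨y, h, hlt⟩

/-- Every edge of `H` is bichromatic. -/
lemma Hpp_bichrom (hg : g.IsGraph) (hsup : g.Supported)
    (hkey : ∀ i, ∀ p ∈ (Rs i).envPl, ∀ p' ∈ (Rs i).envPl,
      (p, p') ∉ (Rs i).newPP)
    (hfreshP : ∀ i, Disjoint (Rs i).newP g.ports)
    (hpairP : ∀ i j, i ≠ j → Disjoint (Rs i).newP (Rs j).newP)
    {x y : ℕ} (h : (x, y) ∈ (parResult Rs g ms).pp) :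
    (colH g (parResult Rs g ms) x ↔ ¬ colH g (parResult Rs g ms) y) := by
  have hxy : x ≠ y := by
    rintro rfl
    exact Hpp_irrefl hg hfreshP x h
  by_cases hx : x ∈ g.ports <;> by_cases hy : y ∈ g.ports
  · -- both old
    have hold : (x, y) ∈ g.pp := Hpp_old hkey hfreshP h hx hy
    have h1 : colOld g x ↔ y < x := colOld_iff hg hold
    have h2 : colOld g y ↔ x < y := colOld_iff hg (g.pp_symm _ _ hold)
    simp only [colH, hx, hy, true_and, not_true, false_and, or_false,
      not_false_iff]
    constructor
    · intro hcx hcy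
      have := h1.mp hcx
      have := h2.mp hcy
      omega
    · intro hncy
      apply h1.mpr
      have : ¬ x < y := fun hh => hncy (h2.mpr hh)
      omega
  · -- x old, y new
    obtain ⟨i, hyn⟩ : ∃ i, y ∈ (Rs i).newP := by
      rcases Hpp_endpoint hsup ((parResult Rs g ms).pp_symm _ _ h) with h' | h'
      · exact absurd h' hy
      · exact h'
    have huniq : ∀ z, (y, z) ∈ (parResult Rs g ms).pp → z = x := fun z hz =>
      (Hpp_uniq hfreshP hpairP hsup hyn hz
        ((parResult Rs g ms).pp_symm _ _ h))
    simp only [colH, hx, hy, true_and, not_true, false_and, or_false,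
      false_and, false_or, not_false_iff, true_and]
    constructor
    · intro hcx
      rintro (⟨z, hz, hzp, hcz⟩ | ⟨z, hz, hzp, _⟩)
      · rw [huniq z hz] at hcz
        exact hcz hcx
      · rw [huniq z hz] at hzp
        exact hzp hx
    · intro hncy
      by_contra hncx
      exact hncy (Or.inl ⟨x, (parResult Rs g ms).pp_symm _ _ h, hx, hncx⟩)
  · -- x new, y old
    obtain ⟨i, hxn⟩ : ∃ i, x ∈ (Rs i).newP := by
      rcases Hpp_endpoint hsup h with h' | h'
      · exact absurd h' hx
      · exact h'
    have huniq : ∀ z, (x, z) ∈ (parResult Rs g ms).pp → z = y := fun z hz =>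
      Hpp_uniq hfreshP hpairP hsup hxn hz h
    simp only [colH, hx, hy, true_and, not_true, false_and, or_false,
      false_and, false_or, not_false_iff, true_and]
    constructor
    · rintro (⟨z, hz, hzp, hcz⟩ | ⟨z, hz, hzp, _⟩) hcy
      · rw [huniq z hz] at hcz
        exact hcz hcy
      · rw [huniq z hz] at hzp
        exact hzp hy
    · intro hncy
      exact Or.inl ⟨y, h, hy, hncy⟩
  · -- both new
    obtain ⟨i, hxn⟩ : ∃ i, x ∈ (Rs i).newP := by
      rcases Hpp_endpoint hsup h with h' | h'
      · exact absurd h' hx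
      · exact h'
    obtain ⟨j, hyn⟩ : ∃ j, y ∈ (Rs j).newP := by
      rcases Hpp_endpoint hsup ((parResult Rs g ms).pp_symm _ _ h) with h' | h'
      · exact absurd h' hy
      · exact h'
    have hux : ∀ z, (x, z) ∈ (parResult Rs g ms).pp → z = y := fun z hz =>
      Hpp_uniq hfreshP hpairP hsup hxn hz h
    have huy : ∀ z, (y, z) ∈ (parResult Rs g ms).pp → z = x := fun z hz =>
      Hpp_uniq hfreshP hpairP hsup hyn hz
        ((parResult Rs g ms).pp_symm _ _ h)
    simp only [colH, hx, hy, true_and, not_true, false_and, or_false,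
      false_and, false_or, not_false_iff, true_and]
    have hcx : ((∃ z, (x, z) ∈ (parResult Rs g ms).pp ∧ z ∈ g.ports ∧
        ¬ colOld g z) ∨ (∃ z, (x, z) ∈ (parResult Rs g ms).pp ∧
        z ∉ g.ports ∧ z < x)) ↔ y < x := by
      constructor
      · rintro (⟨z, hz, hzp, _⟩ | ⟨z, hz, _, hlt⟩)
        · rw [hux z hz] at hzp
          exact absurd hzp hy
        · rwa [hux z hz] at hlt
      · intro hlt
        exact Or.inr ⟨y, h, hy, hlt⟩
    have hcy : ((∃ z, (y, z) ∈ (parResult Rs g ms).pp ∧ z ∈ g.ports ∧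
        ¬ colOld g z) ∨ (∃ z, (y, z) ∈ (parResult Rs g ms).pp ∧
        z ∉ g.ports ∧ z < y)) ↔ x < y := by
      constructor
      · rintro (⟨z, hz, hzp, _⟩ | ⟨z, hz, _, hlt⟩)
        · rw [huy z hz] at hzp
          exact absurd hzp hx
        · rwa [huy z hz] at hlt
      · intro hlt
        exact Or.inr ⟨x, (parResult Rs g ms).pp_symm _ _ h, hx, hlt⟩
    rw [hcx, hcy]
    omega

end ParAux

end Aux

/-- for a conflict free environment sensitive graph rewrite
system in which no rule creates a new port-port connection between two
environment ports of its left-hand side, the result `G' = H̄` of any parallel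
rewrite step on a graph `G` is a graph. -/
theorem parallel_step_isGraph {A ι : Type} (Rs : ι → ESRR A)
    (hcompat : ∀ i j, i ≠ j → Compatible (Rs i) (Rs j))
    (hkey : ∀ i, ∀ p ∈ (Rs i).envPl, ∀ p' ∈ (Rs i).envPl, (p, p') ∉ (Rs i).newPP)
    (g : SPregraph ℕ A) (hg : g.IsGraph) (hsup : g.Supported)
    (ms : ∀ i, SPregraph.Match (Rs i).lhs g)
    (hfreshN : ∀ i, Disjoint (Rs i).newN g.nodes)
    (hfreshP : ∀ i, Disjoint (Rs i).newP g.ports)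
    (hpairN : ∀ i j, i ≠ j → Disjoint (Rs i).newN (Rs j).newN)
    (hpairP : ∀ i j, i ≠ j → Disjoint (Rs i).newP (Rs j).newP) :
    ((parResult Rs g ms).quot).IsGraph := by
  set H := parResult Rs g ms with hH
  -- port equivalence preserves the coloring
  have hcolEq : ∀ p q, H.portEquiv p q → (colH g H p ↔ colH g H q) := by
    intro p q h
    induction h with
    | refl => exact Iff.rfl
    | tail _ hstep ih =>
        obtain ⟨z, h1, h2⟩ := hstep
        have b1 := Hpp_bichrom hg hsup hkey hfreshP hpairP h1
        have b2 := Hpp_bichrom hg hsup hkey hfreshP hpairP h2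
        exact ih.trans (by rw [b1, b2]; exact not_not)
  refine ⟨?_, ?_, ?_⟩
  · -- pn functional
    rintro p n₁ n₂ ⟨p₁, m₁, hpn₁, heq₁⟩ ⟨p₂, m₂, hpn₂, heq₂⟩
    simp only [Prod.mk.injEq] at heq₁ heq₂
    have hpe : H.portEquiv p₁ p₂ :=
      H.equiv_of_clsP_eq (heq₁.1.symm.trans heq₂.1)
    have hne : H.nodeEquiv m₁ m₂ :=
      Relation.ReflTransGen.single ⟨p₁, p₂, hpn₁, hpe, hpn₂⟩
    rw [heq₁.2, heq₂.2]
    exact H.clsN_eq_of_equiv hne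
  · -- pp functional
    rintro p q₁ q₂ ⟨p₁, r₁, hpp₁, heq₁⟩ ⟨p₂, r₂, hpp₂, heq₂⟩
    simp only [Prod.mk.injEq] at heq₁ heq₂
    have hpe : H.portEquiv p₁ p₂ :=
      H.equiv_of_clsP_eq (heq₁.1.symm.trans heq₂.1)
    have hqe : H.portEquiv r₁ r₂ :=
      H.ppEquiv_extend (H.pp_symm _ _ hpp₁) hpe hpp₂
    rw [heq₁.2, heq₂.2]
    exact H.clsP_eq_of_equiv hqe
  · -- pp irreflexive
    rintro c ⟨p, q, hpq, heq⟩
    simp only [Prod.mk.injEq] at heq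
    have hpe : H.portEquiv p q := H.equiv_of_clsP_eq (heq.1.symm.trans heq.2)
    have h1 := hcolEq p q hpe
    have h2 := Hpp_bichrom hg hsup hkey hfreshP hpairP hpq
    rw [h1] at h2
    exact iff_not_self h2
end
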